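/- Define K_n := ∫_0^∞ (ln(1+x))^n e^{-x} dx for n ≥ 0. Then K_{n+1}/K_n = (ln(n+1)) · (1 + o(1)) as n → ∞; that is, the quotient (K_{n+1}/K_n) / ln(n+1) tends to 1 as n → ∞. -/

import Mathlib

/-!
Write `L x = log (1 + x)`, so that `Kₙ = ∫ Lⁿ e^{-x}` over `(0, ∞)` are the moments of `L`.

Lower bound: pointwise AM-GM (Cauchy–Schwarz) makes the moments log-convex, so the ratios
`K_{k+1} / K_k` increase and `K_{n+1} ≤ (K_{n+1} / Kₙ)^{n+1}` since `K₀ = 1`. Combined with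
`K_{n+1} ≥ L(a)^{n+1} e^{-a}` at `a = (n+1) / log (n+1)` this gives
`K_{n+1} / Kₙ ≥ (log (n+1) - log log (n+1)) e^{-1 / log (n+1)}`.

Upper bound: split the integral of `K_{n+1}` at `x = n`. Below, `L ≤ log (1 + n)`. Above, once
`log (1 + n) ≥ 2`, `L(x)^{n+1}` grows at most like `e^{(x - n)/2}`, so the tail is at most
`2 log (1 + n)^{n+1} e^{-n}`, which is exponentially small against `Kₙ ≥ L(n/2)ⁿ e^{-n/2}`
because `L(n) ≤ (3/2) L(n/2)` and `(3/2) e^{-1/2} < 1`.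
-/

open MeasureTheory Filter Topology Real Set

noncomputable def logMoment (n : ℕ) : ℝ :=
  ∫ x in Ioi (0 : ℝ), log (1 + x) ^ n * exp (-x)

lemma integrableOn_log_one_add_pow_mul_exp_neg (n : ℕ) :
    IntegrableOn (fun x : ℝ => log (1 + x) ^ n * exp (-x)) (Ioi 0) := by
  have hGamma : IntegrableOn (fun x : ℝ => exp (-x) * x ^ ((n : ℝ) + 1 - 1)) (Ioi 0) :=
    GammaIntegral_convergent (by positivity)
  refine hGamma.mono' (by fun_prop) ?_
  filter_upwards [ae_restrict_mem measurableSet_Ioi] with x (hx : 0 < x)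
  have hlog : 0 ≤ log (1 + x) := log_nonneg (by linarith)
  have hlog_le : log (1 + x) ≤ x := by linarith [log_le_sub_one_of_pos (by linarith : 0 < 1 + x)]
  rw [add_sub_cancel_right, rpow_natCast, norm_of_nonneg (by positivity), mul_comm]
  gcongr

lemma logMoment_zero : logMoment 0 = 1 := by
  simp only [logMoment, pow_zero, one_mul]
  exact integral_exp_neg_Ioi_zero

lemma log_one_add_pow_mul_exp_neg_le_logMoment (n : ℕ) {a : ℝ} (ha : 0 ≤ a) :
    log (1 + a) ^ n * exp (-a) ≤ logMoment n := by
  have hint := integrableOn_log_one_add_pow_mul_exp_neg n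
  calc log (1 + a) ^ n * exp (-a) = ∫ x in Ioi a, log (1 + a) ^ n * exp (-x) := by
        rw [integral_const_mul, integral_exp_neg_Ioi]
    _ ≤ ∫ x in Ioi a, log (1 + x) ^ n * exp (-x) := by
        refine setIntegral_mono_on ((integrableOn_exp_neg_Ioi a).const_mul _)
          (hint.mono_set (Ioi_subset_Ioi ha)) measurableSet_Ioi fun x (hx : a < x) => ?_
        gcongr
        exact log_nonneg (by linarith)
    _ ≤ logMoment n := by
        refine setIntegral_mono_set hint ?_ (Ioi_subset_Ioi ha).eventuallyLE
        filter_upwards [ae_restrict_mem measurableSet_Ioi] with x (hx : 0 < x)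
        have : 0 ≤ log (1 + x) := log_nonneg (by linarith)
        positivity

lemma logMoment_pos (n : ℕ) : 0 < logMoment n :=
  lt_of_lt_of_le (by have := log_pos (by norm_num : (1 : ℝ) < 1 + 1); positivity)
    (log_one_add_pow_mul_exp_neg_le_logMoment n zero_le_one)

lemma two_mul_mul_logMoment_succ_le (n : ℕ) (t : ℝ) :
    2 * t * logMoment (n + 1) ≤ t ^ 2 * logMoment n + logMoment (n + 2) := by
  have hint := integrableOn_log_one_add_pow_mul_exp_neg
  rw [logMoment, logMoment, logMoment, ← integral_const_mul, ← integral_const_mul,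
    ← integral_add ((hint n).const_mul _) (hint (n + 2))]
  refine setIntegral_mono_on ((hint (n + 1)).const_mul _)
    (((hint n).const_mul _).add (hint (n + 2))) measurableSet_Ioi fun x (hx : 0 < x) => ?_
  have hlog : 0 ≤ log (1 + x) := log_nonneg (by linarith)
  have hsq : 0 ≤ log (1 + x) ^ n * exp (-x) * (t - log (1 + x)) ^ 2 := by positivity
  linarith [show t ^ 2 * (log (1 + x) ^ n * exp (-x)) + log (1 + x) ^ (n + 2) * exp (-x)
      - 2 * t * (log (1 + x) ^ (n + 1) * exp (-x))
      = log (1 + x) ^ n * exp (-x) * (t - log (1 + x)) ^ 2 by ring]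

lemma logMoment_succ_sq_le (n : ℕ) :
    logMoment (n + 1) ^ 2 ≤ logMoment n * logMoment (n + 2) := by
  set t := logMoment (n + 1) / logMoment n
  have ht : t * logMoment n = logMoment (n + 1) := div_mul_cancel₀ _ (logMoment_pos n).ne'
  have h := two_mul_mul_logMoment_succ_le n t
  rw [sq t, mul_assoc t t, ht] at h
  calc logMoment (n + 1) ^ 2 = logMoment n * (t * logMoment (n + 1)) := by rw [← ht]; ring
    _ ≤ logMoment n * logMoment (n + 2) :=
        mul_le_mul_of_nonneg_left (by linarith) (logMoment_pos n).le

lemma le_mul_ratio_pow_of_sq_le_mul {u : ℕ → ℝ} (hu : ∀ n, 0 < u n)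
    (h : ∀ n, u (n + 1) ^ 2 ≤ u n * u (n + 2)) (n : ℕ) :
    u (n + 1) ≤ u 0 * (u (n + 1) / u n) ^ (n + 1) := by
  set r : ℕ → ℝ := fun k => u (k + 1) / u k
  have hr_pos : ∀ k, 0 < r k := fun k => div_pos (hu _) (hu _)
  have hr : Monotone r := monotone_nat_of_le_succ fun k => by
    rw [div_le_div_iff₀ (hu k) (hu (k + 1)), ← sq, mul_comm]
    exact h k
  have hle_pow : ∀ m ≤ n + 1, u m ≤ u 0 * r n ^ m := by
    intro m hm
    induction m with
    | zero => simp
    | succ m ih =>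
      calc u (m + 1) = u m * r m := by simp only [r]; field_simp [(hu m).ne']
        _ ≤ u 0 * r n ^ m * r n :=
          mul_le_mul (ih (by omega)) (hr (by omega)) (hr_pos m).le
            (mul_nonneg (hu 0).le (pow_nonneg (hr_pos n).le m))
        _ = u 0 * r n ^ (m + 1) := by ring
  exact hle_pow (n + 1) le_rfl

lemma log_one_add_mul_exp_le_logMoment_ratio (n : ℕ) {a : ℝ} (ha : 0 ≤ a) :
    log (1 + a) * exp (-(a / (n + 1))) ≤ logMoment (n + 1) / logMoment n := by
  refine le_of_pow_le_pow_left₀ n.succ_ne_zero (div_pos (logMoment_pos _) (logMoment_pos _)).le ?_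
  calc (log (1 + a) * exp (-(a / (n + 1)))) ^ (n + 1) = log (1 + a) ^ (n + 1) * exp (-a) := by
        rw [mul_pow, ← exp_nat_mul]; push_cast; field_simp
    _ ≤ logMoment (n + 1) := log_one_add_pow_mul_exp_neg_le_logMoment _ ha
    _ ≤ logMoment 0 * (logMoment (n + 1) / logMoment n) ^ (n + 1) :=
        le_mul_ratio_pow_of_sq_le_mul logMoment_pos logMoment_succ_sq_le n
    _ = (logMoment (n + 1) / logMoment n) ^ (n + 1) := by rw [logMoment_zero, one_mul]

lemma log_one_add_pow_le_mul_exp {m : ℕ} {c x : ℝ} (hc : 0 < c) (hcx : c ≤ x)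
    (hm : 2 * m ≤ (1 + c) * log (1 + c)) :
    log (1 + x) ^ m ≤ log (1 + c) ^ m * exp ((x - c) / 2) := by
  have hq_sub : log (1 + x) - log (1 + c) ≤ (x - c) / (1 + c) := by
    have := log_le_sub_one_of_pos
      (show 0 < (1 + x) / (1 + c) from div_pos (by linarith) (by linarith))
    rw [log_div (by linarith) (by linarith)] at this
    rwa [show (1 + x) / (1 + c) - 1 = (x - c) / (1 + c) by field_simp; ring] at this
  set p := log (1 + c)
  set q := log (1 + x)
  have hp : 0 < p := log_pos (by linarith)
  have hexponent : m * (q / p - 1) ≤ (x - c) / 2 := by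
    rw [show q / p - 1 = (q - p) / p by field_simp]
    calc m * ((q - p) / p) ≤ m * ((x - c) / (1 + c) / p) := by gcongr
      _ = 2 * m * (x - c) / ((1 + c) * p) / 2 := by field_simp
      _ ≤ (x - c) / 2 := by
        gcongr
        rw [div_le_iff₀ (by positivity), mul_comm _ (x - c)]
        exact mul_le_mul_of_nonneg_left hm (by linarith)
  calc q ^ m = p ^ m * (q / p) ^ m := by rw [div_pow, mul_div_cancel₀ _ (pow_pos hp m).ne']
    _ ≤ p ^ m * exp (q / p - 1) ^ m := by
        gcongr
        · exact div_nonneg (log_nonneg (by linarith)) hp.le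
        · linarith [add_one_le_exp (q / p - 1)]
    _ = p ^ m * exp (m * (q / p - 1)) := by rw [exp_nat_mul]
    _ ≤ p ^ m * exp ((x - c) / 2) := by gcongr

lemma logMoment_succ_le (n : ℕ) {c : ℝ} (hc : 0 < c)
    (h : 2 * (n + 1) ≤ (1 + c) * log (1 + c)) :
    logMoment (n + 1) ≤ log (1 + c) * logMoment n + 2 * log (1 + c) ^ (n + 1) * exp (-c) := by
  set p := log (1 + c)
  set g : ℝ → ℝ := fun x => p ^ (n + 1) * exp (-(c / 2)) * exp (-(1 / 2) * x)
  have hint := integrableOn_log_one_add_pow_mul_exp_neg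
  have hg : IntegrableOn g (Ioi c) := (exp_neg_integrableOn_Ioi c (by norm_num)).const_mul _
  have hgi : IntegrableOn ((Ioi c).indicator g) (Ioi 0) :=
    (hg.integrable_indicator measurableSet_Ioi).integrableOn
  have hpoint : ∀ x ∈ Ioi (0 : ℝ), log (1 + x) ^ (n + 1) * exp (-x)
      ≤ p * (log (1 + x) ^ n * exp (-x)) + (Ioi c).indicator g x := by
    intro x (hx : 0 < x)
    have hlog : 0 ≤ log (1 + x) := log_nonneg (by linarith)
    rcases le_or_gt x c with hxc | hcx
    · have : log (1 + x) ≤ p := log_le_log (by linarith) (by linarith)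
      rw [indicator_of_notMem (show x ∉ Ioi c from not_lt.mpr hxc), add_zero, pow_succ',
        mul_assoc]
      gcongr
    · rw [indicator_of_mem (show x ∈ Ioi c from hcx)]
      have htail := log_one_add_pow_le_mul_exp hc hcx.le (by exact_mod_cast h)
      calc log (1 + x) ^ (n + 1) * exp (-x) ≤ p ^ (n + 1) * exp ((x - c) / 2) * exp (-x) := by
            gcongr
        _ = g x := by simp only [g, mul_assoc, ← exp_add]; ring_nf
        _ ≤ p * (log (1 + x) ^ n * exp (-x)) + g x := by
            have : 0 ≤ p := log_nonneg (by linarith)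
            linarith [show 0 ≤ p * (log (1 + x) ^ n * exp (-x)) by positivity]
  calc logMoment (n + 1)
      ≤ ∫ x in Ioi 0, p * (log (1 + x) ^ n * exp (-x)) + (Ioi c).indicator g x :=
        setIntegral_mono_on (hint (n + 1)) (((hint n).const_mul p).add hgi) measurableSet_Ioi hpoint
    _ = p * logMoment n + ∫ x in Ioi c, g x := by
        rw [integral_add ((hint n).const_mul p) hgi, integral_const_mul,
          setIntegral_indicator measurableSet_Ioi, Ioi_inter_Ioi, max_eq_right hc.le, logMoment]
    _ = p * logMoment n + 2 * p ^ (n + 1) * exp (-c) := by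
        rw [integral_const_mul, integral_exp_mul_Ioi (by norm_num)]
        have : exp (-(c / 2)) * exp (-(1 / 2) * c) = exp (-c) := by rw [← exp_add]; ring_nf
        linear_combination (2 * p ^ (n + 1)) * this

lemma log_one_add_le_three_halves_mul_log_one_add_half {x : ℝ} (hx : 4 ≤ x) :
    log (1 + x) ≤ 3 / 2 * log (1 + x / 2) := by
  suffices log ((1 + x) ^ 2) ≤ log ((1 + x / 2) ^ 3) by
    rw [log_pow, log_pow] at this
    push_cast at this
    linarith
  exact log_le_log (by positivity) (by nlinarith)

lemma logMoment_ratio_div_log_le {n : ℕ} (hn : 4 ≤ n) (hlog : 2 ≤ log (n + 1)) :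
    logMoment (n + 1) / logMoment n / log (n + 1) ≤ 1 + 2 * (3 / 2 * exp (-(1 / 2))) ^ n := by
  rw [add_comm (n : ℝ) 1] at hlog ⊢
  set p := log (1 + (n : ℝ))
  have hn' : (4 : ℝ) ≤ n := by exact_mod_cast hn
  have hp : 0 < p := by linarith
  have hK := logMoment_pos n
  have hsplit := logMoment_succ_le n (c := n) (by linarith) (by nlinarith)
  have hhalf := log_one_add_le_three_halves_mul_log_one_add_half hn'
  have hlow := log_one_add_pow_mul_exp_neg_le_logMoment n (a := n / 2) (by linarith)
  have htail :
      2 * p ^ (n + 1) * exp (-n) ≤ p * (2 * (3 / 2 * exp (-(1 / 2))) ^ n) * logMoment n :=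
    calc 2 * p ^ (n + 1) * exp (-n)
        = 2 * p * (p ^ n * (exp (-(1 / 2)) ^ n * exp (-(n / 2)))) := by
          rw [← exp_nat_mul, ← exp_add]; ring_nf
      _ ≤ 2 * p * ((3 / 2 * log (1 + n / 2)) ^ n * (exp (-(1 / 2)) ^ n * exp (-(n / 2)))) := by
          gcongr
      _ = p * (2 * (3 / 2 * exp (-(1 / 2))) ^ n) * (log (1 + n / 2) ^ n * exp (-(n / 2))) := by
          ring
      _ ≤ p * (2 * (3 / 2 * exp (-(1 / 2))) ^ n) * logMoment n := by gcongr
  rw [div_div, div_le_iff₀ (by positivity)]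
  linarith

lemma one_sub_log_div_mul_exp_le_logMoment_ratio_div_log {n : ℕ} (hn : 0 < n) :
    (1 - log (log (n + 1)) / log (n + 1)) * exp (-(1 / log (n + 1)))
      ≤ logMoment (n + 1) / logMoment n / log (n + 1) := by
  set y := log ((n : ℝ) + 1)
  have hn1 : (1 : ℝ) < n + 1 := by norm_cast; omega
  have hy : 0 < y := log_pos hn1
  -- `(n + 1) / y` is roughly where `log (1 + x) ^ (n + 1) * exp (-x)` peaks
  have h := log_one_add_mul_exp_le_logMoment_ratio n (a := (n + 1) / y) (by positivity)
  have hloga : y - log y ≤ log (1 + (n + 1) / y) := by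
    rw [← log_div (by positivity) hy.ne']
    exact log_le_log (by positivity) (by linarith)
  rw [show ((n : ℝ) + 1) / y / (n + 1) = y⁻¹ by field_simp] at h
  rw [le_div_iff₀ hy, one_div]
  calc (1 - log y / y) * exp (-y⁻¹) * y = (y - log y) * exp (-y⁻¹) := by field_simp
    _ ≤ log (1 + (n + 1) / y) * exp (-y⁻¹) := by gcongr
    _ ≤ _ := h

lemma tendsto_one_sub_log_div_mul_exp_neg_inv :
    Tendsto (fun y : ℝ => (1 - log y / y) * exp (-(1 / y))) atTop (𝓝 1) := by
  have hlog : Tendsto (fun y : ℝ => log y / y) atTop (𝓝 0) := by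
    simpa using tendsto_pow_log_div_mul_add_atTop 1 0 1 one_ne_zero
  have hinv : Tendsto (fun y : ℝ => -(1 / y)) atTop (𝓝 0) := by
    simpa using (tendsto_inv_atTop_zero (𝕜 := ℝ)).neg
  simpa using (tendsto_const_nhds.sub hlog).mul (tendsto_exp_nhds_zero_nhds_one.comp hinv)

/-- With `Kₙ = ∫_0^∞ (ln(1+x))ⁿ e^{-x} dx`, one has
`K_{n+1}/Kₙ = ln(n+1) (1 + o(1))` as `n → ∞`, i.e. `(K_{n+1}/Kₙ) / ln(n+1) → 1`. -/
theorem K_ratio_asymptotics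
    (K : ℕ → ℝ)
    (hK : ∀ n : ℕ, K n = ∫ x in Set.Ioi (0 : ℝ), (Real.log (1 + x)) ^ n * Real.exp (-x)) :
    Tendsto (fun n : ℕ => (K (n + 1) / K n) / Real.log (n + 1)) atTop (𝓝 1) := by
  obtain rfl : K = logMoment := funext hK
  have hlog : Tendsto (fun n : ℕ => log ((n : ℝ) + 1)) atTop atTop :=
    tendsto_log_atTop.comp (tendsto_atTop_add_const_right _ 1 tendsto_natCast_atTop_atTop)
  have hq : 3 / 2 * exp (-(1 / 2)) < 1 := by
    rw [exp_neg, ← div_eq_mul_inv, div_lt_one (exp_pos _)]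
    linarith [add_one_lt_exp (by norm_num : (1 / 2 : ℝ) ≠ 0)]
  have hupper : Tendsto (fun n : ℕ => 1 + 2 * (3 / 2 * exp (-(1 / 2))) ^ n) atTop (𝓝 1) := by
    simpa using ((tendsto_pow_atTop_nhds_zero_of_lt_one (by positivity) hq).const_mul 2).const_add 1
  refine tendsto_of_tendsto_of_tendsto_of_le_of_le'
    (tendsto_one_sub_log_div_mul_exp_neg_inv.comp hlog) hupper ?_ ?_
  · filter_upwards [eventually_gt_atTop 0] with n hn
    exact one_sub_log_div_mul_exp_le_logMoment_ratio_div_log hn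
  · filter_upwards [eventually_ge_atTop 4, hlog.eventually_ge_atTop 2] with n hn hn_log
    exact logMoment_ratio_div_log_le hn hn_log
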